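/- Let X be a finite set of variables and identify each literal with the vertex (x, b) ∈ X × Bool. Let T be a finite family of 3-clauses, each an ordered triple of literals, such that every literal (x, b) occurs in exactly one position of exactly one triple of T, and let D be a finite family of 2-clauses, each an unordered pair of literals. Let G be the directed graph on X × Bool with the following arcs: (x, true) → (x, false) and (x, false) → (x, true) for every x ∈ X; l → l' and l' → l for every 2-clause {l, l'} ∈ D; and l_1 → l_2, l_2 → l_3, l_3 → l_1 for every 3-clause (l_1, l_2, l_3) ∈ T. Suppose λ : X → Bool satisfies every clause of T and every clause of D, i.e., each such clause contains a literal (x, b) with λ(x) = b. Then, setting S = {(x, λ(x)) : x ∈ X}, the subgraph of G induced on (X × Bool) ∖ S is acyclic. -/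
import Mathlib


/-- The arcs of the directed graph on the literals `X × Bool` built from a family `T` of
3-clauses and a family `D` of 2-clauses: a 2-cycle between the two literals of each
variable, a 2-cycle between the two literals of each 2-clause of `D`, and a directed
triangle on the three literals of each 3-clause of `T`. -/
def satArc {X ι κ : Type*} (T : ι → Fin 3 → X × Bool)
    (D : κ → (X × Bool) × (X × Bool)) : X × Bool → X × Bool → Prop :=
  fun p q =>
    q = (p.1, !p.2) ∨
    (∃ j : κ, D j = (p, q) ∨ D j = (q, p)) ∨
    (∃ i : ι, (T i 0 = p ∧ T i 1 = q) ∨ (T i 1 = p ∧ T i 2 = q) ∨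
      (T i 2 = p ∧ T i 0 = q))

/-- If every literal occurs in exactly one position of exactly one 3-clause of `T`, and
the assignment `λ` satisfies every clause of `T` and of `D`, then deleting the vertex set
`S = {(x, λ(x)) : x ∈ X}` from the clause digraph leaves an acyclic digraph. -/
theorem satisfying_assignment_gives_fvs {X ι κ : Type*}
    [Fintype X] [Fintype ι] [Fintype κ]
    (T : ι → Fin 3 → X × Bool) (D : κ → (X × Bool) × (X × Bool))
    (hocc : ∀ l : X × Bool, ∃! p : ι × Fin 3, T p.1 p.2 = l)
    (lam : X → Bool)
    (hT : ∀ i : ι, ∃ j : Fin 3, lam (T i j).1 = (T i j).2)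
    (hD : ∀ j : κ, lam (D j).1.1 = (D j).1.2 ∨ lam (D j).2.1 = (D j).2.2) :
    ∀ p : X × Bool,
      ¬ Relation.TransGen
          (fun a b => satArc T D a b ∧ a.2 ≠ lam a.1 ∧ b.2 ≠ lam b.1) p p := by
  classical
  set occ : X × Bool → ι × Fin 3 := fun l => (hocc l).choose with hocc_def
  have hoccuniq : ∀ (l : X × Bool) (p : ι × Fin 3), T p.1 p.2 = l → p = occ l :=
    fun l p h => (hocc l).choose_spec.2 p h
  choose sat hsat using hT
  set m : X × Bool → ℕ := fun l => ((occ l).2 - sat (occ l).1 : Fin 3).val with hm_def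
  have finlem : ∀ (j s : Fin 3), s ≠ j → s ≠ j + 1 →
      ((j - s : Fin 3) : ℕ) < ((j + 1 - s : Fin 3) : ℕ) := by decide
  have key : ∀ a b, (satArc T D a b ∧ a.2 ≠ lam a.1 ∧ b.2 ≠ lam b.1) → m a < m b := by
    rintro a b ⟨harc, ha, hb⟩
    have step : ∀ (i : ι) (j j' : Fin 3), j' = j + 1 → T i j = a → T i j' = b →
        m a < m b := by
      intro i j j' hjj' hpa hpb
      have h1 : (i, j) = occ a := hoccuniq a (i, j) hpa
      have h2 : (i, j') = occ b := hoccuniq b (i, j') hpb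
      have hs1 : sat i ≠ j := by
        intro h
        apply ha
        rw [← hpa, ← h]
        exact (hsat i).symm
      have hs2 : sat i ≠ j' := by
        intro h
        apply hb
        rw [← hpb, ← h]
        exact (hsat i).symm
      have hma : m a = ((j - sat i : Fin 3) : ℕ) := by
        simp only [hm_def, ← h1]
      have hmb : m b = ((j' - sat i : Fin 3) : ℕ) := by
        simp only [hm_def, ← h2]
      rw [hma, hmb]
      subst hjj'
      exact finlem j (sat i) hs1 hs2
    rcases harc with h1 | ⟨j, hj⟩ | ⟨i, ⟨hpa, hpb⟩ | ⟨hpa, hpb⟩ | ⟨hpa, hpb⟩⟩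
    · exfalso
      apply hb
      rw [h1]
      have h2 := ha
      revert h2
      show a.2 ≠ lam a.1 → (!a.2) = lam a.1
      generalize lam a.1 = u
      generalize a.2 = v
      revert u v
      decide
    · exfalso
      rcases hD j with h | h <;> rcases hj with hj | hj <;> rw [hj] at h <;> simp at h
      · exact ha h.symm
      · exact hb h.symm
      · exact hb h.symm
      · exact ha h.symm
    · exact step i 0 1 (by decide) hpa hpb
    · exact step i 1 2 (by decide) hpa hpb
    · exact step i 2 0 (by decide) hpa hpb
  have mono : ∀ a b, Relation.TransGen
      (fun a b => satArc T D a b ∧ a.2 ≠ lam a.1 ∧ b.2 ≠ lam b.1) a b → m a < m b := by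
    intro a b h
    induction h with
    | single h => exact key _ _ h
    | tail _ h2 ih => exact lt_trans ih (key _ _ h2)
  intro p hcyc
  exact lt_irrefl _ (mono p p hcyc)
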